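/- Let V be a finite-dimensional real vector space of dimension N and let Ω be an alternating (n+1)-form on V that is non-degenerate, i.e. for every ξ ∈ V, if the interior product ξ ⌟ Ω = 0 as an n-form then ξ = 0. Define an equivalence relation on Λⁿ V by X ∼ X' iff X ⌟ Ω = X' ⌟ Ω (as linear forms on V). Then the map from V to (Λⁿ V / ∼)* sending ξ to the induced functional [X] ↦ −(ξ ⌟ Ω)(X) is a linear isomorphism; in particular, for every n-form φ on V that is constant on ∼-equivalence classes (i.e. X ⌟ Ω = X' ⌟ Ω implies φ(X) = φ(X')), there exists a unique ξ ∈ V with φ + ξ ⌟ Ω = 0. -/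
import Mathlib


open ExteriorAlgebra

/-- The `n`-th exterior power `ΛⁿV`, as a submodule of the exterior algebra. -/
noncomputable def extPow (n : ℕ) (V : Type*) [AddCommGroup V] [Module ℝ V] :
    Submodule ℝ (ExteriorAlgebra ℝ V) :=
  LinearMap.range (ExteriorAlgebra.ι ℝ : V →ₗ[ℝ] ExteriorAlgebra ℝ V) ^ n

/-- Evaluation of an alternating `n`-form on elements of `ΛⁿV`. -/
noncomputable def evalForm {V : Type*} [AddCommGroup V] [Module ℝ V] (n : ℕ)
    (φ : V [⋀^Fin n]→ₗ[ℝ] ℝ) : extPow n V →ₗ[ℝ] ℝ :=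
  (ExteriorAlgebra.liftAlternating
      (Function.update (fun i => (0 : V [⋀^Fin i]→ₗ[ℝ] ℝ)) n φ)).comp
    (extPow n V).subtype

/-- For a vector `v`, the linear form `X ↦ (v ⌟ Ω)(X) = Ω(v, X)` on `ΛⁿV`. -/
noncomputable def iotaOmega {V : Type*} [AddCommGroup V] [Module ℝ V] {n : ℕ}
    (Ω : V [⋀^Fin (n + 1)]→ₗ[ℝ] ℝ) (v : V) : extPow n V →ₗ[ℝ] ℝ :=
  evalForm n (Ω.curryLeft v)

section Aux

variable {V : Type*} [AddCommGroup V] [Module ℝ V]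

lemma ιMulti_mem_extPow (n : ℕ) (v : Fin n → V) :
    ExteriorAlgebra.ιMulti ℝ n v ∈ extPow n V := by
  show ExteriorAlgebra.ιMulti ℝ n v ∈ ⋀[ℝ]^n V
  rw [← ExteriorAlgebra.ιMulti_span_fixedDegree]
  exact Submodule.subset_span ⟨v, rfl⟩

lemma evalForm_ιMulti (n : ℕ) (φ : V [⋀^Fin n]→ₗ[ℝ] ℝ) (v : Fin n → V) :
    evalForm n φ ⟨ExteriorAlgebra.ιMulti ℝ n v, ιMulti_mem_extPow n v⟩ = φ v := by
  simp [evalForm, ExteriorAlgebra.liftAlternating_apply_ιMulti]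

lemma evalForm_add (n : ℕ) (φ ψ : V [⋀^Fin n]→ₗ[ℝ] ℝ) :
    evalForm n (φ + ψ) = evalForm n φ + evalForm n ψ := by
  have h : Function.update (fun i => (0 : V [⋀^Fin i]→ₗ[ℝ] ℝ)) n (φ + ψ) =
      Function.update (fun i => (0 : V [⋀^Fin i]→ₗ[ℝ] ℝ)) n φ +
      Function.update (fun i => (0 : V [⋀^Fin i]→ₗ[ℝ] ℝ)) n ψ := by
    funext i
    by_cases hi : i = n
    · subst hi; simp
    · simp [Function.update_of_ne hi]
  rw [evalForm, h, map_add]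
  rfl

lemma evalForm_smul (n : ℕ) (c : ℝ) (φ : V [⋀^Fin n]→ₗ[ℝ] ℝ) :
    evalForm n (c • φ) = c • evalForm n φ := by
  have h : Function.update (fun i => (0 : V [⋀^Fin i]→ₗ[ℝ] ℝ)) n (c • φ) =
      c • Function.update (fun i => (0 : V [⋀^Fin i]→ₗ[ℝ] ℝ)) n φ := by
    funext i
    by_cases hi : i = n
    · subst hi; simp
    · simp [Function.update_of_ne hi]
  rw [evalForm, h, map_smul]
  rfl

/-- `evalForm` as a linear map. -/
noncomputable def evalFormL (n : ℕ) : (V [⋀^Fin n]→ₗ[ℝ] ℝ) →ₗ[ℝ] (extPow n V →ₗ[ℝ] ℝ) where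
  toFun := evalForm n
  map_add' := evalForm_add n
  map_smul' := evalForm_smul n

/-- `ξ ↦ iotaOmega Ω ξ` as a linear map. -/
noncomputable def Tlin {n : ℕ} (Ω : V [⋀^Fin (n + 1)]→ₗ[ℝ] ℝ) :
    V →ₗ[ℝ] (extPow n V →ₗ[ℝ] ℝ) :=
  (evalFormL n).comp Ω.curryLeft

lemma Tlin_apply {n : ℕ} (Ω : V [⋀^Fin (n + 1)]→ₗ[ℝ] ℝ) (ξ : V) :
    Tlin Ω ξ = iotaOmega Ω ξ := rfl

end Aux

/-- for a non-degenerate alternating `(n+1)`-form `Ω` on a finite-dimensional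
real vector space `V`, with `X ∼ X' ⟺ X ⌟ Ω = X' ⌟ Ω` on `ΛⁿV`, the map
`V → (ΛⁿV/∼)*`, `ξ ↦ ([X] ↦ -(ξ ⌟ Ω)(X))` is a linear isomorphism; in particular every
`n`-form `φ` constant on `∼`-classes satisfies `φ + ξ ⌟ Ω = 0` for a unique `ξ ∈ V`. -/
theorem stmt0 {V : Type*} [AddCommGroup V] [Module ℝ V] [FiniteDimensional ℝ V]
    (N n : ℕ) (hN : Module.finrank ℝ V = N)
    (Ω : V [⋀^Fin (n + 1)]→ₗ[ℝ] ℝ)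
    (hnd : ∀ ξ : V, Ω.curryLeft ξ = 0 → ξ = 0) :
    Function.Bijective
      (fun ξ : V =>
        Submodule.liftQ (⨅ v : V, LinearMap.ker (iotaOmega Ω v)) (-(iotaOmega Ω ξ))
          (fun X hX => by
            simp only [LinearMap.mem_ker, LinearMap.neg_apply, neg_eq_zero]
            exact (Submodule.mem_iInf _).mp hX ξ))
    ∧ ∀ φ : extPow n V →ₗ[ℝ] ℝ,
        (∀ X X' : extPow n V,
          (∀ v : V, iotaOmega Ω v X = iotaOmega Ω v X') → φ X = φ X') →
        ∃! ξ : V, φ + iotaOmega Ω ξ = 0 := by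
  set K := ⨅ v : V, LinearMap.ker (iotaOmega Ω v) with hK
  -- T is injective
  have hTinj : Function.Injective (Tlin Ω) := by
    rw [injective_iff_map_eq_zero]
    intro ξ hξ
    apply hnd
    ext v
    have := congrArg (fun f => f ⟨ExteriorAlgebra.ιMulti ℝ n v, ιMulti_mem_extPow n v⟩) hξ
    simpa [Tlin_apply, iotaOmega, evalForm_ιMulti] using this
  -- K is the dual coannihilator of the range of T
  have hKcoann : K = (LinearMap.range (Tlin Ω)).dualCoannihilator := by
    ext X
    simp only [hK, Submodule.mem_iInf, LinearMap.mem_ker, Submodule.mem_dualCoannihilator]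
    constructor
    · rintro h f ⟨v, rfl⟩
      exact h v
    · intro h v
      exact h (Tlin Ω v) ⟨v, rfl⟩
  -- every functional vanishing on K is in the range of T
  have hsurjkey : ∀ φ : extPow n V →ₗ[ℝ] ℝ, (∀ X ∈ K, φ X = 0) → ∃ ξ : V, Tlin Ω ξ = φ := by
    intro φ hφ
    have hmem : φ ∈ K.dualAnnihilator := (Submodule.mem_dualAnnihilator φ).mpr hφ
    rw [hKcoann, Subspace.dualCoannihilator_dualAnnihilator_eq] at hmem
    exact hmem
  constructor
  · constructor
    · intro ξ ξ' h
      apply hTinj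
      have h2 := congrArg (fun f => f.comp K.mkQ) h
      simp only [Submodule.liftQ_mkQ] at h2
      rw [Tlin_apply, Tlin_apply]
      exact neg_injective h2
    · intro g
      have hφ : ∀ X ∈ K, (g.comp K.mkQ) X = 0 := by
        intro X hX
        simp [Submodule.Quotient.mk_eq_zero K |>.mpr hX, (Submodule.Quotient.mk_eq_zero K).mpr hX]
      obtain ⟨ξ, hξ⟩ := hsurjkey (g.comp K.mkQ) hφ
      refine ⟨-ξ, ?_⟩
      apply Submodule.linearMap_qext
      rw [Submodule.liftQ_mkQ]
      rw [← Tlin_apply, map_neg, neg_neg, hξ]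
  · intro φ hφ
    have hφ0 : ∀ X ∈ K, (-φ) X = 0 := by
      intro X hX
      have h0 : ∀ v : V, iotaOmega Ω v X = iotaOmega Ω v 0 := by
        intro v
        have := (Submodule.mem_iInf _).mp hX v
        simpa using this
      have := hφ X 0 h0
      simp [this]
    obtain ⟨ξ, hξ⟩ := hsurjkey (-φ) hφ0
    refine ⟨ξ, ?_, ?_⟩
    · show φ + iotaOmega Ω ξ = 0
      rw [← Tlin_apply, hξ]; abel
    · intro ξ' hξ'
      have hξ'' : φ + iotaOmega Ω ξ' = 0 := hξ'
      apply hTinj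
      rw [Tlin_apply, Tlin_apply]
      have h2 : iotaOmega Ω ξ' = -φ := eq_neg_of_add_eq_zero_right hξ''
      rw [h2, ← Tlin_apply, hξ]
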